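/- Let A, B be bounded linear operators on a Banach space. The Strang splitting satisfies ‖e^{(A+B)h} − e^{Ah/2}e^{Bh}e^{Ah/2}‖ ≤ C h³ for all h ∈ [0,1], with C depending only on ‖A‖ and ‖B‖. -/

import Mathlib

/-!
Every exponential `exp (t • M)` with `0 ≤ t ≤ 1` equals its second-order Taylor polynomial
`1 + t • M + t ^ 2 • (M * M) / 2` up to `‖M‖ ^ 3 * exp ‖M‖ * t ^ 3`. Such second-order
expansions multiply like truncated power series, with an explicit constant for the cubic
remainder. Expanding `exp ((h / 2) • A) * exp (h • B) * exp ((h / 2) • A)` this way gives the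
coefficients `A + B` and `(A + B) ^ 2 / 2`: the commutator `A * B - B * A` that appears at
second order in the product of two exponentials cancels because the splitting is symmetric.
These are the coefficients of `exp (h • (A + B))`, so the two operators differ by `O(h ^ 3)`.
-/

open NormedSpace Nat

universe u

variable {𝔸 : Type u} [NormedRing 𝔸]

theorem norm_mul_one_add_le (x y : 𝔸) : ‖x * (1 + y)‖ ≤ ‖x‖ * (1 + ‖y‖) := by
  rw [mul_one_add, mul_one_add]
  exact (norm_add_le _ _).trans (add_le_add le_rfl (norm_mul_le _ _))

theorem norm_one_add_mul_le (x y : 𝔸) : ‖(1 + x) * y‖ ≤ (1 + ‖x‖) * ‖y‖ := by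
  rw [one_add_mul, one_add_mul]
  exact (norm_add_le _ _).trans (add_le_add le_rfl (norm_mul_le _ _))

variable [NormedAlgebra ℝ 𝔸]

theorem norm_exp_sub_sum_range_le [CompleteSpace 𝔸] (x : 𝔸) {n : ℕ} (hn : n ≠ 0) :
    ‖exp x - ∑ k ∈ Finset.range n, (k !⁻¹ : ℝ) • x ^ k‖ ≤ ‖x‖ ^ n * Real.exp ‖x‖ := by
  have htail : exp x - ∑ k ∈ Finset.range n, (k !⁻¹ : ℝ) • x ^ k
      = ∑' k, ((k + n) !⁻¹ : ℝ) • x ^ (k + n) := by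
    rw [congrFun (exp_eq_tsum ℝ) x, ← (expSeries_summable' (𝕂 := ℝ) x).sum_add_tsum_nat_add n,
      add_sub_cancel_left]
  have hterm (k : ℕ) : ‖((k + n) !⁻¹ : ℝ) • x ^ (k + n)‖ ≤ ‖x‖ ^ n * (‖x‖ ^ k / k !) := by
    rw [norm_smul, norm_inv, RCLike.norm_natCast]
    calc ((k + n) ! : ℝ)⁻¹ * ‖x ^ (k + n)‖ ≤ (k ! : ℝ)⁻¹ * ‖x‖ ^ (k + n) := by
          gcongr
          · omega
          · exact norm_pow_le' x (by omega)
      _ = ‖x‖ ^ n * (‖x‖ ^ k / k !) := by ring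
  have hsummable : Summable fun k ↦ ‖((k + n) !⁻¹ : ℝ) • x ^ (k + n)‖ :=
    (summable_nat_add_iff n).mpr (norm_expSeries_summable' x)
  calc ‖exp x - ∑ k ∈ Finset.range n, (k !⁻¹ : ℝ) • x ^ k‖
      ≤ ∑' k, ‖((k + n) !⁻¹ : ℝ) • x ^ (k + n)‖ := htail ▸ norm_tsum_le_tsum_norm hsummable
    _ ≤ ∑' k, ‖x‖ ^ n * (‖x‖ ^ k / k !) :=
        hsummable.tsum_le_tsum hterm ((Real.summable_pow_div_factorial ‖x‖).mul_left _)
    _ = ‖x‖ ^ n * Real.exp ‖x‖ := by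
        rw [tsum_mul_left, Real.exp_eq_exp_ℝ, congrFun exp_eq_tsum_div]

theorem norm_smul_add_sq_smul_le {h m : ℝ} (h0 : 0 ≤ h) (h1 : h ≤ 1) {a₁ a₂ : 𝔸}
    (ha₁ : ‖a₁‖ ≤ m) (ha₂ : ‖a₂‖ ≤ m ^ 2) : ‖h • a₁ + h ^ 2 • a₂‖ ≤ m + m ^ 2 := by
  refine (norm_add_le _ _).trans ?_
  rw [norm_smul, norm_smul, Real.norm_of_nonneg h0, Real.norm_of_nonneg (by positivity)]
  gcongr
  · exact (mul_le_of_le_one_left (norm_nonneg _) h1).trans ha₁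
  · exact (mul_le_of_le_one_left (norm_nonneg _) (pow_le_one₀ h0 h1)).trans ha₂

/-- Bounding `‖a₂‖` by `m ^ 2` makes the size parameter `m` additive under products
(`SecondOrderApprox.mul`). -/
structure SecondOrderApprox (h : ℝ) (u a₁ a₂ : 𝔸) (m K : ℝ) : Prop where
  norm_first_le : ‖a₁‖ ≤ m
  norm_second_le : ‖a₂‖ ≤ m ^ 2
  remainder_nonneg : 0 ≤ K
  norm_remainder_le : ‖u - (1 + h • a₁ + h ^ 2 • a₂)‖ ≤ K * h ^ 3

theorem secondOrderApprox_exp [CompleteSpace 𝔸] {h m : ℝ} (h0 : 0 ≤ h) (h1 : h ≤ 1) {M : 𝔸}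
    (hM : ‖M‖ ≤ m) :
    SecondOrderApprox h (exp (h • M)) M ((2⁻¹ : ℝ) • (M * M)) m (m ^ 3 * Real.exp m) := by
  have hm : 0 ≤ m := (norm_nonneg M).trans hM
  refine ⟨hM, ?_, by positivity, ?_⟩
  · rw [norm_smul, norm_inv, Real.norm_ofNat]
    nlinarith [norm_mul_le_of_le hM hM, norm_nonneg (M * M)]
  · have hquad : ∑ k ∈ Finset.range 3, (k !⁻¹ : ℝ) • (h • M) ^ k
        = 1 + h • M + h ^ 2 • (2⁻¹ : ℝ) • (M * M) := by
      simp [Finset.sum_range_succ, pow_two, smul_smul, factorial, mul_comm]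
    have hhM : ‖h • M‖ ≤ h * m := by
      rw [norm_smul, Real.norm_of_nonneg h0]
      exact mul_le_mul_of_nonneg_left hM h0
    calc ‖exp (h • M) - (1 + h • M + h ^ 2 • (2⁻¹ : ℝ) • (M * M))‖
        ≤ ‖h • M‖ ^ 3 * Real.exp ‖h • M‖ := hquad ▸ norm_exp_sub_sum_range_le _ (by norm_num)
      _ ≤ (h * m) ^ 3 * Real.exp m := by
          gcongr
          nlinarith
      _ = m ^ 3 * Real.exp m * h ^ 3 := by ring

def mulRemainder (m K n L : ℝ) : ℝ :=
  K * (1 + n + n ^ 2) + (1 + m + m ^ 2) * L + K * L + m * n ^ 2 + m ^ 2 * n + m ^ 2 * n ^ 2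

namespace SecondOrderApprox

variable {h m n K L : ℝ} {u v a₁ a₂ b₁ b₂ : 𝔸}

theorem mul (h0 : 0 ≤ h) (h1 : h ≤ 1) (hu : SecondOrderApprox h u a₁ a₂ m K)
    (hv : SecondOrderApprox h v b₁ b₂ n L) :
    SecondOrderApprox h (u * v) (a₁ + b₁) (a₂ + a₁ * b₁ + b₂) (m + n) (mulRemainder m K n L) := by
  obtain ⟨ha₁, ha₂, hK, hu⟩ := hu
  obtain ⟨hb₁, hb₂, hL, hv⟩ := hv
  have hm : 0 ≤ m := (norm_nonneg _).trans ha₁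
  have hn : 0 ≤ n := (norm_nonneg _).trans hb₁
  refine ⟨(norm_add_le _ _).trans (add_le_add ha₁ hb₁), ?_, by unfold mulRemainder; positivity, ?_⟩
  · calc ‖a₂ + a₁ * b₁ + b₂‖ ≤ m ^ 2 + m * n + n ^ 2 := by
          refine norm_add₃_le.trans ?_
          gcongr
          exact norm_mul_le_of_le ha₁ hb₁
      _ ≤ (m + n) ^ 2 := by nlinarith [mul_nonneg hm hn]
  obtain ⟨ρ, rfl⟩ : ∃ ρ, u = 1 + h • a₁ + h ^ 2 • a₂ + ρ := ⟨_, (add_sub_cancel _ u).symm⟩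
  obtain ⟨σ, rfl⟩ : ∃ σ, v = 1 + h • b₁ + h ^ 2 • b₂ + σ := ⟨_, (add_sub_cancel _ v).symm⟩
  rw [add_sub_cancel_left] at hu hv
  have hexpand : (1 + h • a₁ + h ^ 2 • a₂ + ρ) * (1 + h • b₁ + h ^ 2 • b₂ + σ)
        - (1 + h • (a₁ + b₁) + h ^ 2 • (a₂ + a₁ * b₁ + b₂))
      = ρ * (1 + (h • b₁ + h ^ 2 • b₂)) + (1 + (h • a₁ + h ^ 2 • a₂)) * σ + ρ * σ
        + (h ^ 3 • (a₁ * b₂ + a₂ * b₁) + h ^ 4 • (a₂ * b₂)) := by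
    simp only [mul_add, add_mul, one_mul, mul_one, smul_mul_assoc, mul_smul_comm, smul_smul,
      smul_add]
    module
  have hρq : ‖ρ * (1 + (h • b₁ + h ^ 2 • b₂))‖ ≤ K * h ^ 3 * (1 + n + n ^ 2) :=
    (norm_mul_one_add_le _ _).trans (mul_le_mul hu
      (by linarith [norm_smul_add_sq_smul_le h0 h1 hb₁ hb₂]) (by positivity) (by positivity))
  have hpσ : ‖(1 + (h • a₁ + h ^ 2 • a₂)) * σ‖ ≤ (1 + m + m ^ 2) * (L * h ^ 3) :=
    (norm_one_add_mul_le _ _).trans (mul_le_mul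
      (by linarith [norm_smul_add_sq_smul_le h0 h1 ha₁ ha₂]) hv (norm_nonneg _) (by positivity))
  have h3 : h ^ 3 ≤ 1 := pow_le_one₀ h0 h1
  have hρσ : ‖ρ * σ‖ ≤ K * L * h ^ 3 :=
    calc ‖ρ * σ‖ ≤ K * h ^ 3 * (L * h ^ 3) :=
          (norm_mul_le _ _).trans (mul_le_mul hu hv (norm_nonneg _) (by positivity))
      _ ≤ K * L * h ^ 3 := by nlinarith [mul_nonneg (mul_nonneg hK hL) (pow_nonneg h0 3)]
  have hcross : ‖h ^ 3 • (a₁ * b₂ + a₂ * b₁) + h ^ 4 • (a₂ * b₂)‖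
      ≤ (m * n ^ 2 + m ^ 2 * n + m ^ 2 * n ^ 2) * h ^ 3 := by
    have hX : ‖a₁ * b₂ + a₂ * b₁‖ ≤ m * n ^ 2 + m ^ 2 * n :=
      (norm_add_le _ _).trans (add_le_add (norm_mul_le_of_le ha₁ hb₂) (norm_mul_le_of_le ha₂ hb₁))
    have hY : ‖a₂ * b₂‖ ≤ m ^ 2 * n ^ 2 := norm_mul_le_of_le ha₂ hb₂
    have h4 : h ^ 4 ≤ h ^ 3 := pow_le_pow_of_le_one h0 h1 (by norm_num)
    refine (norm_add_le _ _).trans ?_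
    rw [norm_smul, norm_smul, Real.norm_of_nonneg (by positivity),
      Real.norm_of_nonneg (by positivity)]
    nlinarith [pow_nonneg h0 3, pow_nonneg h0 4, norm_nonneg (a₂ * b₂), mul_nonneg hm hn]
  rw [hexpand]
  refine norm_add₄_le.trans ?_
  unfold mulRemainder
  linarith

theorem norm_sub_le (hu : SecondOrderApprox h u a₁ a₂ m K) (hv : SecondOrderApprox h v b₁ b₂ n L)
    (h₁ : a₁ = b₁) (h₂ : a₂ = b₂) : ‖u - v‖ ≤ (K + L) * h ^ 3 := by
  subst h₁ h₂
  calc ‖u - v‖ = ‖(u - (1 + h • a₁ + h ^ 2 • a₂)) - (v - (1 + h • a₁ + h ^ 2 • a₂))‖ := by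
        rw [sub_sub_sub_cancel_right]
    _ ≤ K * h ^ 3 + L * h ^ 3 :=
        (norm_sub_le _ _).trans (add_le_add hu.norm_remainder_le hv.norm_remainder_le)
    _ = (K + L) * h ^ 3 := by ring

end SecondOrderApprox

theorem strang_splitting_second_order
    {X : Type*} [NormedAddCommGroup X] [NormedSpace ℝ X] [CompleteSpace X] :
    ∃ C : ℝ → ℝ → ℝ, ∀ (A B : X →L[ℝ] X), ∀ h ∈ Set.Icc (0:ℝ) 1,
      ‖exp (h • (A + B)) - exp ((h / 2) • A) * exp (h • B) * exp ((h / 2) • A)‖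
        ≤ C ‖A‖ ‖B‖ * h ^ 3 := by
  refine ⟨fun a b ↦ (a + b) ^ 3 * Real.exp (a + b) +
    mulRemainder (a / 2 + b) (mulRemainder (a / 2) ((a / 2) ^ 3 * Real.exp (a / 2))
      b (b ^ 3 * Real.exp b)) (a / 2) ((a / 2) ^ 3 * Real.exp (a / 2)), ?_⟩
  rintro A B h ⟨h0, h1⟩
  have hA := secondOrderApprox_exp h0 h1 (M := (2⁻¹ : ℝ) • A) (m := ‖A‖ / 2)
    (by rw [norm_smul, norm_inv, Real.norm_ofNat, inv_mul_eq_div])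
  rw [smul_smul, ← div_eq_mul_inv] at hA
  have hB := secondOrderApprox_exp h0 h1 (le_refl ‖B‖)
  have hAB := secondOrderApprox_exp h0 h1 (norm_add_le A B)
  refine hAB.norm_sub_le ((hA.mul h0 h1 hB).mul h0 h1 hA) (by module) ?_
  simp only [mul_add, add_mul, smul_mul_assoc, mul_smul_comm, smul_smul, smul_add]
  module
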